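/- arXiv:1501.07376 — 3 statements merged into one kernel-verified Lean document; each statement's English description precedes it below -/
import Mathlib

section
/- Let M be an n×n Hermitian positive semidefinite complex matrix that is β-banded and whose spectrum is contained in [0, 4ρ] for some ρ > 0, and let τ > 0. Then for all indices k ≠ t with ρτ ≥ 1 and √(4ρτ) ≤ |k−t|/β ≤ 2ρτ, the entries of the matrix exponential satisfy |(exp(−τM))_{kt}| ≤ 10·exp( −(|k−t|/β)² / (5ρτ) ). -/
/-!
Diagonalise `M = U diag(λ) U*` and set `y = 2ρτ`, `u i = 1 - λ i / (2ρ) ∈ [-1, 1]`, so that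
`exp(-τM) k t = e^{-y} ∑ i, v i e^{y u i}` with weights `v i = U k i conj (U t i)` of total mass
at most `1`. Bandedness makes `(M ^ m) k t` vanish for `m < d = ⌈|k - t| / β⌉`, so the weights
annihilate every polynomial of degree `< d` in `u`, in particular the Chebyshev polynomials `T_l`
with `|l| < d`. Expanding `(2u)^m = ∑ j, C(m, j) T_{2j-m}(u)` bounds the `m`-th moment by the
binomial mass on `|2j - m| ≥ d`, which is at most `2 (2 cosh a)^m e^{-ad}` for every `a ≥ 0`.
Summing the exponential series gives `|exp(-τM) k t| ≤ 2 exp (y (cosh a - 1) - a d)`; the choice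
`a = |k - t| / (β y) ≤ 1` together with `cosh a ≤ 1 + 3a²/5` produces the Gaussian exponent.
-/

open Finset Polynomial Real

theorem Complex.sum_choose_mul_exp_eq_two_mul_cosh_pow (z : ℂ) (m : ℕ) :
    ∑ j ∈ range (m + 1), (m.choose j : ℂ) * exp (z * (2 * j - m)) = (2 * cosh z) ^ m := by
  rw [two_cosh, add_pow]
  refine sum_congr rfl fun j hj => ?_
  rw [← exp_nat_mul, ← exp_nat_mul, ← exp_add,
    Nat.cast_sub (Nat.lt_succ_iff.mp (mem_range.mp hj))]
  ring_nf

theorem Real.sum_choose_mul_exp_eq_two_mul_cosh_pow (a : ℝ) (m : ℕ) :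
    ∑ j ∈ range (m + 1), (m.choose j : ℝ) * exp (a * (2 * j - m)) = (2 * cosh a) ^ m := by
  exact_mod_cast Complex.sum_choose_mul_exp_eq_two_mul_cosh_pow a m

theorem Real.two_mul_cos_pow_eq_sum (θ : ℝ) (m : ℕ) :
    (2 * cos θ) ^ m = ∑ j ∈ range (m + 1), (m.choose j : ℝ) * cos ((2 * j - m) * θ) := by
  have h := Complex.sum_choose_mul_exp_eq_two_mul_cosh_pow (θ * Complex.I) m
  rw [Complex.cosh_mul_I, ← Complex.ofReal_cos] at h
  calc (2 * cos θ) ^ m = ((2 * (cos θ : ℂ)) ^ m).re := by norm_cast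
    _ = _ := by
      rw [← h, Complex.re_sum]
      refine sum_congr rfl fun j _ => ?_
      rw [show θ * Complex.I * (2 * j - m) = ((2 * j - m) * θ : ℝ) * Complex.I by push_cast; ring,
        ← Complex.ofReal_natCast, Complex.re_ofReal_mul, Complex.exp_ofReal_mul_I_re]

theorem Polynomial.Chebyshev.two_mul_pow_eq_sum_eval_T {x : ℝ} (hx : |x| ≤ 1) (m : ℕ) :
    (2 * x) ^ m = ∑ j ∈ range (m + 1), (m.choose j : ℝ) * (Chebyshev.T ℝ (2 * j - m)).eval x := by
  obtain ⟨hx₁, hx₂⟩ := abs_le.mp hx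
  rw [← cos_arccos hx₁ hx₂, Real.two_mul_cos_pow_eq_sum]
  simp [Chebyshev.T_real_cos]

theorem Real.exp_mul_abs_le (a x : ℝ) : exp (a * |x|) ≤ exp (a * x) + exp (-a * x) := by
  rcases abs_cases x with ⟨h, -⟩ | ⟨h, -⟩ <;> rw [h]
  · linarith [exp_pos (-a * x)]
  · rw [mul_neg, ← neg_mul]
    linarith [exp_pos (a * x)]

theorem sum_choose_tail_le (m d : ℕ) {a : ℝ} (ha : 0 ≤ a) :
    ∑ j ∈ range (m + 1) with d ≤ (2 * ((j : ℕ) : ℤ) - m).natAbs, (m.choose j : ℝ) ≤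
      2 * (2 * cosh a) ^ m * exp (-(a * d)) := by
  have key : ∀ j : ℕ, d ≤ (2 * (j : ℤ) - m).natAbs →
      1 ≤ (exp (a * (2 * j - m)) + exp (-a * (2 * j - m))) * exp (-(a * d)) := by
    intro j hj
    have hd : (d : ℝ) ≤ |2 * (j : ℝ) - m| := by
      have : (d : ℝ) ≤ ((2 * (j : ℤ) - m).natAbs : ℝ) := by exact_mod_cast hj
      simpa [Nat.cast_natAbs] using this
    rw [exp_neg, ← div_eq_mul_inv, one_le_div (exp_pos _)]
    exact (exp_le_exp.mpr (mul_le_mul_of_nonneg_left hd ha)).trans (exp_mul_abs_le _ _)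
  calc ∑ j ∈ range (m + 1) with d ≤ (2 * ((j : ℕ) : ℤ) - m).natAbs, (m.choose j : ℝ)
      ≤ ∑ j ∈ range (m + 1) with d ≤ (2 * ((j : ℕ) : ℤ) - m).natAbs,
          m.choose j * ((exp (a * (2 * j - m)) + exp (-a * (2 * j - m))) * exp (-(a * d))) :=
        sum_le_sum fun j hj =>
          le_mul_of_one_le_right (Nat.cast_nonneg _) (key j (mem_filter.mp hj).2)
    _ ≤ ∑ j ∈ range (m + 1),
          m.choose j * ((exp (a * (2 * j - m)) + exp (-a * (2 * j - m))) * exp (-(a * d))) :=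
        sum_le_sum_of_subset_of_nonneg (filter_subset _ _) fun _ _ _ => by positivity
    _ = 2 * (2 * cosh a) ^ m * exp (-(a * d)) := by
        simp only [mul_add, add_mul, sum_add_distrib, ← mul_assoc, ← sum_mul,
          sum_choose_mul_exp_eq_two_mul_cosh_pow, cosh_neg]
        ring

theorem Real.hasSum_pow_div_factorial (r : ℝ) :
    HasSum (fun m => r ^ m / m.factorial) (exp r) := by
  simpa [exp_eq_exp_ℝ] using NormedSpace.expSeries_div_hasSum_exp r

theorem Real.cosh_le_one_add_mul_sq {a : ℝ} (ha : |a| ≤ 1) : cosh a ≤ 1 + 3 / 5 * a ^ 2 := by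
  have hpos := exp_bound ha (n := 4) (by norm_num)
  have hneg := exp_bound (x := -a) (by rwa [abs_neg]) (n := 4) (by norm_num)
  simp only [sum_range_succ, sum_range_zero, abs_neg] at hpos hneg
  norm_num [Nat.factorial, Odd.neg_pow] at hpos hneg
  have ha4 : |a| ^ 4 ≤ a ^ 2 :=
    sq_abs a ▸ pow_le_pow_of_le_one (abs_nonneg a) ha (by norm_num)
  rw [cosh_eq]
  linarith [(abs_le.mp hpos).2, (abs_le.mp hneg).2, sq_nonneg a]

section Moments

variable {𝕜 ι : Type*} [RCLike 𝕜] [Fintype ι] {v : ι → 𝕜} {x : ι → ℝ} {d : ℕ}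

theorem sum_mul_eval_eq_zero_of_sum_mul_pow_eq_zero
    (h : ∀ m < d, ∑ i, v i * ((x i ^ m : ℝ) : 𝕜) = 0) {P : ℝ[X]} (hP : P.natDegree < d) :
    ∑ i, v i * ((P.eval (x i) : ℝ) : 𝕜) = 0 := by
  simp_rw [eval_eq_sum_range' hP, RCLike.ofReal_sum, RCLike.ofReal_mul, mul_sum]
  rw [sum_comm]
  refine sum_eq_zero fun m hm => ?_
  simp_rw [mul_left_comm (v _), ← mul_sum, h m (mem_range.mp hm), mul_zero]

theorem norm_sum_mul_pow_le_of_vanishing (hx : ∀ i, |x i| ≤ 1) (hv : ∑ i, ‖v i‖ ≤ 1)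
    (h : ∀ m < d, ∑ i, v i * ((x i ^ m : ℝ) : 𝕜) = 0) {a : ℝ} (ha : 0 ≤ a) (m : ℕ) :
    ‖∑ i, v i * ((x i ^ m : ℝ) : 𝕜)‖ ≤ 2 * exp (-(a * d)) * cosh a ^ m := by
  set c : ℤ → 𝕜 := fun l => ∑ i, v i * (((Chebyshev.T ℝ l).eval (x i) : ℝ) : 𝕜)
  have hc_le : ∀ l, ‖c l‖ ≤ 1 := fun l => by
    refine (norm_sum_le _ _).trans (le_trans (sum_le_sum fun i _ => ?_) hv)
    rw [norm_mul, RCLike.norm_ofReal]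
    exact mul_le_of_le_one_right (norm_nonneg _) (Chebyshev.abs_eval_T_real_le_one l (hx i))
  have hc_eq_zero : ∀ l : ℤ, l.natAbs < d → c l = 0 := fun l hl =>
    sum_mul_eval_eq_zero_of_sum_mul_pow_eq_zero h ((Chebyshev.natDegree_T ℝ l).trans_lt hl)
  have hexpand : (2 : 𝕜) ^ m * ∑ i, v i * ((x i ^ m : ℝ) : 𝕜) =
      ∑ j ∈ range (m + 1), (m.choose j : 𝕜) * c (2 * j - m) := by
    simp_rw [c, mul_sum, sum_comm (s := range (m + 1))]
    refine sum_congr rfl fun i _ => ?_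
    rw [mul_left_comm, ← RCLike.ofReal_ofNat, ← RCLike.ofReal_pow, ← RCLike.ofReal_mul, ← mul_pow,
      Chebyshev.two_mul_pow_eq_sum_eval_T (hx i), RCLike.ofReal_sum, mul_sum]
    refine sum_congr rfl fun j _ => ?_
    push_cast
    ring
  have hsum : ‖∑ j ∈ range (m + 1), (m.choose j : 𝕜) * c (2 * j - m)‖ ≤
      ∑ j ∈ range (m + 1) with d ≤ (2 * ((j : ℕ) : ℤ) - m).natAbs, (m.choose j : ℝ) := by
    rw [sum_filter]
    refine (norm_sum_le _ _).trans (sum_le_sum fun j _ => ?_)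
    rw [norm_mul, RCLike.norm_natCast]
    split_ifs with hj
    · exact mul_le_of_le_one_right (Nat.cast_nonneg _) (hc_le _)
    · rw [hc_eq_zero _ (not_le.mp hj), norm_zero, mul_zero]
  have h2m : ‖(2 : 𝕜) ^ m‖ = 2 ^ m := by simp
  have := (hsum.trans (sum_choose_tail_le m d ha))
  rw [← hexpand, norm_mul, h2m, mul_pow] at this
  exact le_of_mul_le_mul_left (this.trans_eq (by ring)) (by positivity)

theorem norm_sum_mul_exp_le {K R y : ℝ} (hy : 0 ≤ y)
    (h : ∀ m, ‖∑ i, v i * ((x i ^ m : ℝ) : 𝕜)‖ ≤ K * R ^ m) :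
    ‖∑ i, v i * ((exp (y * x i) : ℝ) : 𝕜)‖ ≤ K * exp (y * R) := by
  have hsum : HasSum (fun m => ∑ i, v i * ((((y * x i) ^ m / m.factorial) : ℝ) : 𝕜))
      (∑ i, v i * ((exp (y * x i) : ℝ) : 𝕜)) :=
    hasSum_sum fun i _ => ((RCLike.hasSum_ofReal 𝕜).mpr (hasSum_pow_div_factorial _)).mul_left (v i)
  refine hsum.norm_le_of_bounded ((hasSum_pow_div_factorial (y * R)).mul_left K) fun m => ?_
  have hterm : ∑ i, v i * ((((y * x i) ^ m / m.factorial) : ℝ) : 𝕜) =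
      ((y ^ m / m.factorial : ℝ) : 𝕜) * ∑ i, v i * ((x i ^ m : ℝ) : 𝕜) := by
    rw [mul_sum]
    refine sum_congr rfl fun i _ => ?_
    push_cast
    ring
  rw [hterm, norm_mul, RCLike.norm_ofReal, abs_of_nonneg (by positivity)]
  calc y ^ m / m.factorial * ‖∑ i, v i * ((x i ^ m : ℝ) : 𝕜)‖
      ≤ y ^ m / m.factorial * (K * R ^ m) := by gcongr; exact h m
    _ = K * ((y * R) ^ m / m.factorial) := by ring

end Moments

namespace Matrix

def IsBanded {R : Type*} [Zero R] {n : ℕ} (M : Matrix (Fin n) (Fin n) R) (β : ℕ) : Prop :=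
  ∀ i j : Fin n, (β : ℝ) < |((i : ℕ) : ℝ) - ((j : ℕ) : ℝ)| → M i j = 0

section Banded

variable {R : Type*} {n : ℕ}

theorem isBanded_one [Zero R] [One R] : (1 : Matrix (Fin n) (Fin n) R).IsBanded 0 :=
  fun i j hij => one_apply_ne fun h => by simp [h] at hij

theorem IsBanded.mul [NonUnitalNonAssocSemiring R] {A B : Matrix (Fin n) (Fin n) R} {β γ : ℕ}
    (hA : A.IsBanded β) (hB : B.IsBanded γ) : (A * B).IsBanded (β + γ) := fun i j hij => by
  rw [mul_apply]
  refine sum_eq_zero fun l _ => ?_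
  by_cases hil : (β : ℝ) < |((i : ℕ) : ℝ) - ((l : ℕ) : ℝ)|
  · rw [hA i l hil, zero_mul]
  · have := abs_sub_le ((i : ℕ) : ℝ) ((l : ℕ) : ℝ) ((j : ℕ) : ℝ)
    push_cast at hij
    rw [hB l j (by linarith), mul_zero]

theorem IsBanded.pow [Semiring R] {A : Matrix (Fin n) (Fin n) R} {β : ℕ} (hA : A.IsBanded β)
    (m : ℕ) : (A ^ m).IsBanded (m * β) := by
  induction m with
  | zero => simpa using isBanded_one
  | succ m ih => simpa [pow_succ, add_mul] using ih.mul hA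

end Banded

section Hermitian

variable {𝕜 ι : Type*} [RCLike 𝕜] [Fintype ι] [DecidableEq ι] {A : Matrix ι ι 𝕜}

theorem sum_norm_mul_norm_le_one_of_mem_unitaryGroup {U : Matrix ι ι 𝕜} (hU : U ∈ unitaryGroup ι 𝕜)
    (k t : ι) : ∑ i, ‖U k i‖ * ‖U t i‖ ≤ 1 := by
  have hrow : ∀ k, ∑ i, ‖U k i‖ ^ 2 = 1 := fun k => by
    have := congrArg (· k k) (mem_unitaryGroup_iff.mp hU)
    simp only [mul_apply, star_apply, one_apply_eq, RCLike.star_def, RCLike.mul_conj] at this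
    exact_mod_cast this
  calc ∑ i, ‖U k i‖ * ‖U t i‖ ≤ ∑ i, (‖U k i‖ ^ 2 + ‖U t i‖ ^ 2) / 2 :=
        sum_le_sum fun i _ => by nlinarith [sq_nonneg (‖U k i‖ - ‖U t i‖)]
    _ = 1 := by rw [← sum_div, sum_add_distrib, hrow, hrow]; norm_num

theorem IsHermitian.cfc_apply_eq_sum (hA : A.IsHermitian) (f : ℝ → ℝ) (k t : ι) :
    cfc f A k t = ∑ i, (hA.eigenvectorUnitary : Matrix ι ι 𝕜) k i *
      star ((hA.eigenvectorUnitary : Matrix ι ι 𝕜) t i) * (f (hA.eigenvalues i) : 𝕜) := by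
  rw [hA.cfc_eq, IsHermitian.cfc, Unitary.conjStarAlgAut_apply, mul_apply]
  simp [mul_diagonal, star_apply, mul_right_comm]

theorem IsHermitian.exp_neg_smul_eq_cfc (hA : A.IsHermitian) (τ : ℝ) :
    NormedSpace.exp (-(τ • A)) = cfc (fun x => Real.exp (-(τ * x))) A := by
  have hτA : IsSelfAdjoint (-(τ • A)) := ((IsSelfAdjoint.all τ).smul hA.isSelfAdjoint).neg
  -- Matrices carry no global norm instance; the `L∞`-operator norm is borrowed only to identify
  -- the CFC exponential with `NormedSpace.exp`, which depends on the topology alone.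
  calc NormedSpace.exp (-(τ • A)) = cfc Real.exp (-(τ • A)) :=
        (@CFC.real_exp_eq_normedSpace_exp _ Matrix.linftyOpNormedRing _
          Matrix.linftyOpNormedAlgebra IsHermitian.instContinuousFunctionalCalculus _ hτA).symm
    _ = cfc (fun x => Real.exp (-(τ * x))) A := by
        rw [cfc_comp' Real.exp (fun x => -(τ * x)) A, cfc_neg,
          cfc_const_mul_id τ A hA.isSelfAdjoint]

theorem IsHermitian.norm_exp_neg_smul_apply_le (hA : A.IsHermitian) {ρ τ : ℝ} (hρ : 0 < ρ)
    (hτ : 0 ≤ τ) (hspec : ∀ i, hA.eigenvalues i ∈ Set.Icc 0 (4 * ρ)) {k t : ι} {d : ℕ}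
    (hd : ∀ m < d, (A ^ m) k t = 0) {a : ℝ} (ha : 0 ≤ a) :
    ‖NormedSpace.exp (-(τ • A)) k t‖ ≤ 2 * Real.exp (2 * ρ * τ * (cosh a - 1) - a * d) := by
  set U : Matrix ι ι 𝕜 := (hA.eigenvectorUnitary : Matrix ι ι 𝕜)
  set v : ι → 𝕜 := fun i => U k i * star (U t i)
  set u : ι → ℝ := fun i => 1 - hA.eigenvalues i / (2 * ρ)
  set y := 2 * ρ * τ
  have hu : ∀ i, |u i| ≤ 1 := fun i => by
    have h0 : 0 ≤ hA.eigenvalues i / (2 * ρ) := div_nonneg (hspec i).1 (by positivity)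
    have h2 : hA.eigenvalues i / (2 * ρ) ≤ 2 := by
      rw [div_le_iff₀ (by positivity)]; linarith [(hspec i).2]
    exact abs_le.mpr ⟨by linarith, by linarith⟩
  have hv : ∑ i, ‖v i‖ ≤ 1 := by
    simpa only [v, norm_mul, norm_star] using
      sum_norm_mul_norm_le_one_of_mem_unitaryGroup hA.eigenvectorUnitary.2 k t
  have hpow : ∀ m < d, ∑ i, v i * ((hA.eigenvalues i ^ m : ℝ) : 𝕜) = 0 := fun m hm => by
    rw [← hd m hm, ← cfc_pow_id (R := ℝ) A m hA.isSelfAdjoint, hA.cfc_apply_eq_sum]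
  have hu_moments : ∀ m < d, ∑ i, v i * ((u i ^ m : ℝ) : 𝕜) = 0 := fun m hm => by
    have := sum_mul_eval_eq_zero_of_sum_mul_pow_eq_zero hpow (P := (C (-(2 * ρ)⁻¹) * X + C 1) ^ m)
      ((natDegree_pow_le_of_le m natDegree_linear_le).trans_lt (by omega))
    simpa [u, div_eq_inv_mul, sub_eq_neg_add] using this
  have hentry : NormedSpace.exp (-(τ • A)) k t =
      (Real.exp (-y) : 𝕜) * ∑ i, v i * (Real.exp (y * u i) : 𝕜) := by
    rw [hA.exp_neg_smul_eq_cfc, hA.cfc_apply_eq_sum, mul_sum]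
    refine sum_congr rfl fun i _ => ?_
    rw [mul_left_comm, ← RCLike.ofReal_mul, ← Real.exp_add]
    congr 3
    simp only [y, u]
    field_simp
    ring
  calc ‖NormedSpace.exp (-(τ • A)) k t‖
        = Real.exp (-y) * ‖∑ i, v i * (Real.exp (y * u i) : 𝕜)‖ := by
        rw [hentry, norm_mul, RCLike.norm_ofReal, abs_of_pos (Real.exp_pos _)]
    _ ≤ Real.exp (-y) * (2 * Real.exp (-(a * d)) * Real.exp (y * cosh a)) := by
        gcongr
        exact norm_sum_mul_exp_le (by positivity)
          (norm_sum_mul_pow_le_of_vanishing hu hv hu_moments ha)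
    _ = 2 * Real.exp (y * (cosh a - 1) - a * d) := by
        rw [mul_left_comm, ← Real.exp_add, mul_assoc, ← Real.exp_add]
        ring_nf

end Hermitian

end Matrix

open scoped ComplexOrder

theorem exp_banded_entry_bound_regime_one_general
    (n β : ℕ) (hβ : 0 < β) (M : Matrix (Fin n) (Fin n) ℂ) (ρ τ : ℝ)
    (hρ : 0 < ρ) (hτ : 0 < τ)
    (hM : M.PosSemidef)
    (hspec : ∀ i, hM.1.eigenvalues i ∈ Set.Icc (0 : ℝ) (4 * ρ))
    (hband : ∀ i j : Fin n, (β : ℝ) < |((i : ℕ) : ℝ) - ((j : ℕ) : ℝ)| → M i j = 0)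
    (k t : Fin n)
    (h3 : |((k : ℕ) : ℝ) - ((t : ℕ) : ℝ)| / β ≤ 2 * ρ * τ) :
    ‖(NormedSpace.exp (-(τ • M))) k t‖ ≤
      10 * Real.exp (-(|((k : ℕ) : ℝ) - ((t : ℕ) : ℝ)| / β) ^ 2 / (5 * ρ * τ)) := by
  set s := |((k : ℕ) : ℝ) - ((t : ℕ) : ℝ)| / β
  have hpow : ∀ m < ⌈s⌉₊, (M ^ m) k t = 0 := fun m hm =>
    Matrix.IsBanded.pow hband m k t <| by
      push_cast
      exact (lt_div_iff₀ (by exact_mod_cast hβ)).mp (Nat.lt_ceil.mp hm)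
  set y := 2 * ρ * τ
  have hy : 0 < y := by positivity
  set a := s / y
  have hs : a * y = s := div_mul_cancel₀ s hy.ne'
  have ha : 0 ≤ a := by positivity
  have ha_le : |a| ≤ 1 := by
    rw [abs_of_nonneg ha]
    exact div_le_one_of_le₀ h3 hy.le
  calc _ ≤ 2 * exp (y * (cosh a - 1) - a * ⌈s⌉₊) :=
        hM.1.norm_exp_neg_smul_apply_le hρ hτ.le hspec hpow ha
    _ ≤ 10 * exp (-s ^ 2 / (5 * ρ * τ)) := by
        gcongr ?_ * exp ?_
        · norm_num
        have hcosh := mul_le_mul_of_nonneg_left (cosh_le_one_add_mul_sq ha_le) hy.le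
        have hceil := mul_le_mul_of_nonneg_left (Nat.le_ceil s) ha
        calc y * (cosh a - 1) - a * ⌈s⌉₊ ≤ 3 / 5 * (a * y) * a - a * s := by nlinarith
          _ = -s ^ 2 / (5 * ρ * τ) := by rw [← hs]; simp only [y]; field_simp; ring

/-- Entrywise superexponential decay bound (regime i) for the exponential of a banded
Hermitian positive semidefinite matrix: if `M` is `β`-banded with spectrum in `[0, 4ρ]`,
`τ > 0`, and the indices `k ≠ t` satisfy `ρτ ≥ 1` and
`√(4ρτ) ≤ |k - t|/β ≤ 2ρτ`, then
`|(exp (-τM))_{kt}| ≤ 10 exp(-(|k-t|/β)² / (5ρτ))`. -/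
theorem exp_banded_entry_bound_regime_one
    (n β : ℕ) (hβ : 0 < β) (M : Matrix (Fin n) (Fin n) ℂ) (ρ τ : ℝ)
    (hρ : 0 < ρ) (hτ : 0 < τ)
    (hM : M.PosSemidef)
    (hspec : ∀ i, hM.1.eigenvalues i ∈ Set.Icc (0 : ℝ) (4 * ρ))
    (hband : ∀ i j : Fin n, (β : ℝ) < |((i : ℕ) : ℝ) - ((j : ℕ) : ℝ)| → M i j = 0)
    (k t : Fin n) (hkt : k ≠ t)
    (h1 : 1 ≤ ρ * τ)
    (h2 : Real.sqrt (4 * ρ * τ) ≤ |((k : ℕ) : ℝ) - ((t : ℕ) : ℝ)| / β)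
    (h3 : |((k : ℕ) : ℝ) - ((t : ℕ) : ℝ)| / β ≤ 2 * ρ * τ) :
    ‖(NormedSpace.exp (-(τ • M))) k t‖ ≤
      10 * Real.exp (-(|((k : ℕ) : ℝ) - ((t : ℕ) : ℝ)| / β) ^ 2 / (5 * ρ * τ)) :=
  exp_banded_entry_bound_regime_one_general n β hβ M ρ τ hρ hτ hM hspec hband k t h3
end

section
/- Let M be an n×n Hermitian positive definite complex matrix that is β-banded, with smallest and largest eigenvalues λ_min and λ_max. Let M^{−1/2} denote the inverse of the unique Hermitian positive definite square root of M. Set κ₀ = λ_max/λ_min, C(0) = max{ 1/λ_min, (1 + √κ₀)²/(2λ_max) }, C₂ = max{ 1, (1 + (1/2)√κ₀)^{1/2} }, and q = (√λ_max − √λ_min)/(√λ_max + √λ_min). Then for all indices k and t, |(M^{−1/2})_{kt}| ≤ (2/π)·(C(0) + C₂)·q^{|k−t|/β}. -/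
open scoped ComplexOrder

/-- The square root of a positive semidefinite matrix, with its definition from the older Mathlib
(removed since). -/
noncomputable def Matrix.PosSemidef.sqrt {n 𝕜 : Type*} [Fintype n] [RCLike 𝕜] [DecidableEq n]
    {A : Matrix n n 𝕜} (hA : A.PosSemidef) : Matrix n n 𝕜 :=
  hA.1.eigenvectorUnitary.1 * Matrix.diagonal ((↑) ∘ (√·) ∘ hA.1.eigenvalues) *
    (star hA.1.eigenvectorUnitary : Matrix n n 𝕜)

/-!
On `[a, b]` the function `x ↦ x^(-1/2)` is approximated by polynomials of degree `< m` with
uniform error `q^m / √a`, where `q = (√b - √a)/(√b + √a)`. Indeed, writing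
`x = R² (1 - 2 q t + q²)` with `R = (√a + √b)/2` and `t ∈ [-1, 1]` affine in `x`, the generating
function of the Legendre polynomials gives `x^(-1/2) = R⁻¹ ∑ₖ qᵏ Pₖ(t)` with `|Pₖ(t)| ≤ 1`, and we
truncate this series. The generating function itself comes from `|1 - w|⁻¹ = |F(w)|²` for
`F(w) = (1 - w)^(-1/2)` and `w = q e^{iθ}`, `t = cos θ`.

If `M` is `β`-banded then `Mʲ` is `jβ`-banded, so a polynomial `p` of degree `< m`
with `(m - 1) β < |k - t|` has `p(M)ₖₜ = 0`. Hence `(M^(-1/2))ₖₜ = (M^(-1/2) - p(M))ₖₜ`, whose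
size is at most the uniform error of `p` on the spectrum of `M`. Choosing `m = ⌈|k - t|/β⌉` gives
the decay `q^(|k-t|/β) / √λ_min`, and `1/√λ_min` is below the stated constant because `π ≤ 4`.
-/

open Polynomial Finset

lemma Ring.choose_succ_right_eq {K : Type*} [Field K] [CharZero K] (r : K) (j : ℕ) :
    Ring.choose r (j + 1) = Ring.choose r j * (r - j) / (j + 1) := by
  rw [Ring.choose_eq_smul, Ring.choose_eq_smul, descPochhammer_succ_right, smeval_mul,
    Nat.factorial_succ]
  simp [smeval_sub, smeval_X, smeval_natCast]
  field_simp

lemma Ring.choose_neg_one {R : Type*} [Ring R] [BinomialRing R] (k : ℕ) :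
    Ring.choose (-1 : R) k = (-1) ^ k := by
  rw [Ring.choose_neg, add_sub_cancel_left, Ring.choose_natCast, Nat.choose_self, Nat.cast_one,
    Int.negOnePow_def]
  simp [Units.smul_def]

lemma dist_sum_range_le_of_hasSum {E : Type*} [SeminormedAddCommGroup E] {f : ℕ → E} {s : E}
    {q : ℝ} (hf : HasSum f s) (hq : q < 1) (hfq : ∀ n, ‖f n‖ ≤ q ^ n) (m : ℕ) :
    dist (∑ k ∈ range m, f k) s ≤ q ^ m / (1 - q) := by
  simpa using dist_le_of_le_geometric_of_tendsto q 1 hq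
    (fun n => by simpa [dist_eq_norm', sum_range_succ] using hfq n) hf.tendsto_sum_nat m

lemma Real.inv_sqrt_le_two_div_pi_mul {a : ℝ} (ha : 0 < a) :
    (√a)⁻¹ ≤ 2 / Real.pi * (1 / a + 1) := by
  have hsa : 0 < √a := Real.sqrt_pos.2 ha
  have hsq : √a ^ 2 = a := Real.sq_sqrt ha.le
  rw [show 2 / Real.pi * (1 / a + 1) = 2 * (1 + a) / (Real.pi * a) by field_simp,
    le_div_iff₀ (by positivity)]
  calc (√a)⁻¹ * (Real.pi * a) = Real.pi * √a := by field_simp; exact hsq.symm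
    _ ≤ 2 * (1 + a) := by nlinarith [Real.pi_le_four, sq_nonneg (√a - 1)]

/-- `invSqrtCoeff j = (2j choose j) / 4 ^ j`, the `j`-th coefficient of the binomial series of
`(1 - w)^(-1/2)`. -/
noncomputable def invSqrtCoeff (j : ℕ) : ℝ := (-1) ^ j * Ring.choose (-(1 / 2) : ℝ) j

lemma invSqrtCoeff_zero : invSqrtCoeff 0 = 1 := by simp [invSqrtCoeff]

lemma invSqrtCoeff_succ (j : ℕ) :
    invSqrtCoeff (j + 1) = invSqrtCoeff j * ((2 * j + 1) / (2 * j + 2)) := by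
  rw [invSqrtCoeff, invSqrtCoeff, Ring.choose_succ_right_eq, pow_succ]
  field_simp
  ring

lemma invSqrtCoeff_mem_Icc (j : ℕ) : invSqrtCoeff j ∈ Set.Icc 0 1 := by
  induction j with
  | zero => simp [invSqrtCoeff_zero]
  | succ j ih =>
    have h : (2 * j + 1 : ℝ) / (2 * j + 2) ∈ Set.Icc 0 1 :=
      ⟨by positivity, div_le_one_of_le₀ (by linarith) (by positivity)⟩
    rw [invSqrtCoeff_succ]
    exact ⟨mul_nonneg ih.1 h.1, mul_le_one₀ ih.2 h.1 h.2⟩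

lemma sum_antidiagonal_invSqrtCoeff_mul (k : ℕ) :
    ∑ ij ∈ antidiagonal k, invSqrtCoeff ij.1 * invSqrtCoeff ij.2 = 1 := by
  have h := Ring.add_choose_eq (r := (-(1 / 2) : ℝ)) (s := -(1 / 2)) k (Commute.refl _)
  rw [show (-(1 / 2) : ℝ) + -(1 / 2) = -1 by norm_num, Ring.choose_neg_one] at h
  calc ∑ ij ∈ antidiagonal k, invSqrtCoeff ij.1 * invSqrtCoeff ij.2
      = (-1) ^ k * ∑ ij ∈ antidiagonal k,
          Ring.choose (-(1 / 2) : ℝ) ij.1 * Ring.choose (-(1 / 2) : ℝ) ij.2 := by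
        rw [mul_sum]
        refine sum_congr rfl fun ij hij => ?_
        rw [← mem_antidiagonal.mp hij, invSqrtCoeff, invSqrtCoeff, pow_add]
        ring
    _ = 1 := by rw [← h, ← mul_pow]; norm_num

noncomputable def invSqrtSeries (w : ℂ) : ℂ := ∑' j, (invSqrtCoeff j : ℂ) * w ^ j

lemma summable_norm_invSqrtCoeff_mul_pow {w : ℂ} (hw : ‖w‖ < 1) :
    Summable fun j => ‖(invSqrtCoeff j : ℂ) * w ^ j‖ := by
  refine (summable_geometric_of_lt_one (norm_nonneg w) hw).of_nonneg_of_le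
    (fun _ => norm_nonneg _) fun j => ?_
  rw [norm_mul, norm_pow, Complex.norm_real, Real.norm_of_nonneg (invSqrtCoeff_mem_Icc j).1]
  exact mul_le_of_le_one_left (by positivity) (invSqrtCoeff_mem_Icc j).2

lemma hasSum_invSqrtSeries_mul {z w : ℂ} (hz : ‖z‖ < 1) (hw : ‖w‖ < 1) :
    HasSum (fun k => ∑ ij ∈ antidiagonal k,
        (invSqrtCoeff ij.1 : ℂ) * z ^ ij.1 * ((invSqrtCoeff ij.2 : ℂ) * w ^ ij.2))
      (invSqrtSeries z * invSqrtSeries w) := by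
  have hz' := summable_norm_invSqrtCoeff_mul_pow hz
  have hw' := summable_norm_invSqrtCoeff_mul_pow hw
  rw [invSqrtSeries, invSqrtSeries,
    tsum_mul_tsum_eq_tsum_sum_antidiagonal_of_summable_norm hz' hw']
  exact (summable_norm_sum_mul_antidiagonal_of_summable_norm hz' hw').of_norm.hasSum

lemma invSqrtSeries_sq {w : ℂ} (hw : ‖w‖ < 1) : invSqrtSeries w ^ 2 = (1 - w)⁻¹ := by
  have hterm : ∀ k, ∑ ij ∈ antidiagonal k,
      (invSqrtCoeff ij.1 : ℂ) * w ^ ij.1 * ((invSqrtCoeff ij.2 : ℂ) * w ^ ij.2) = w ^ k := by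
    intro k
    rw [← one_mul (w ^ k), ← Complex.ofReal_one, ← sum_antidiagonal_invSqrtCoeff_mul k,
      Complex.ofReal_sum, sum_mul]
    refine sum_congr rfl fun ij hij => ?_
    rw [← mem_antidiagonal.mp hij, pow_add]
    push_cast
    ring
  have h := hasSum_invSqrtSeries_mul hw hw
  simp only [hterm] at h
  exact (sq _).trans (h.unique (hasSum_geometric_of_norm_lt_one hw))

lemma star_invSqrtSeries (w : ℂ) : star (invSqrtSeries w) = invSqrtSeries (star w) := by
  rw [invSqrtSeries, invSqrtSeries, tsum_star]
  simp

lemma invSqrtSeries_mul_star {w : ℂ} (hw : ‖w‖ < 1) :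
    invSqrtSeries w * invSqrtSeries (star w) = ((‖1 - w‖⁻¹ : ℝ) : ℂ) := by
  rw [← star_invSqrtSeries, Complex.star_def, Complex.mul_conj, Complex.normSq_eq_norm_sq,
    ← norm_pow, invSqrtSeries_sq hw, norm_inv]

/-- The Legendre polynomials, through their expansion in Chebyshev polynomials. -/
noncomputable def legendre (k : ℕ) : ℝ[X] :=
  ∑ ij ∈ antidiagonal k,
    C (invSqrtCoeff ij.1 * invSqrtCoeff ij.2) * Chebyshev.T ℝ ((ij.1 : ℤ) - ij.2)

lemma legendre_eval_cos (k : ℕ) (θ : ℝ) :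
    (legendre k).eval (Real.cos θ) = ∑ ij ∈ antidiagonal k,
      invSqrtCoeff ij.1 * invSqrtCoeff ij.2 * Real.cos ((ij.1 - ij.2 : ℝ) * θ) := by
  simp [legendre, eval_finsetSum, Chebyshev.T_real_cos]

lemma natDegree_legendre_le (k : ℕ) : (legendre k).natDegree ≤ k := by
  refine natDegree_sum_le_of_forall_le _ _ fun ij hij => (natDegree_C_mul_le _ _).trans ?_
  rw [Chebyshev.natDegree_T]
  have := mem_antidiagonal.mp hij
  omega

lemma abs_eval_legendre_le_one {t : ℝ} (ht : t ∈ Set.Icc (-1) 1) (k : ℕ) :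
    |(legendre k).eval t| ≤ 1 := by
  rw [← Real.cos_arccos ht.1 ht.2, legendre_eval_cos, ← sum_antidiagonal_invSqrtCoeff_mul k]
  refine (abs_sum_le_sum_abs _ _).trans (sum_le_sum fun ij _ => ?_)
  have hc := mul_nonneg (invSqrtCoeff_mem_Icc ij.1).1 (invSqrtCoeff_mem_Icc ij.2).1
  rw [abs_mul, abs_of_nonneg hc]
  exact mul_le_of_le_one_right hc (Real.abs_cos_le_one _)

lemma hasSum_legendre {s t : ℝ} (hs : |s| < 1) (ht : t ∈ Set.Icc (-1) 1) :
    HasSum (fun k => s ^ k * (legendre k).eval t) (√(1 - 2 * s * t + s ^ 2))⁻¹ := by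
  obtain ⟨θ, rfl⟩ : ∃ θ, Real.cos θ = t := ⟨_, Real.cos_arccos ht.1 ht.2⟩
  set w : ℂ := s * Complex.exp (θ * Complex.I)
  have hw : ‖w‖ < 1 := by simpa [w, Complex.norm_exp_ofReal_mul_I] using hs
  have hpow (i j : ℕ) : w ^ i * star w ^ j =
      ((s ^ (i + j) : ℝ) : ℂ) * Complex.exp (((i - j : ℝ) * θ : ℝ) * Complex.I) := by
    have hstar : star w = s * Complex.exp (-(θ * Complex.I)) := by
      simp [w, ← Complex.exp_conj]
    rw [hstar, mul_pow, mul_pow, ← Complex.exp_nat_mul, ← Complex.exp_nat_mul,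
      mul_mul_mul_comm, ← pow_add, ← Complex.exp_add]
    push_cast
    ring_nf
  have hterm (k : ℕ) : (∑ ij ∈ antidiagonal k, (invSqrtCoeff ij.1 : ℂ) * w ^ ij.1 *
      ((invSqrtCoeff ij.2 : ℂ) * star w ^ ij.2)).re = s ^ k * (legendre k).eval (Real.cos θ) := by
    rw [legendre_eval_cos, Complex.re_sum, mul_sum]
    refine sum_congr rfl fun ij hij => ?_
    rw [mul_mul_mul_comm, hpow, ← mul_assoc, ← Complex.ofReal_mul, ← Complex.ofReal_mul,
      Complex.re_ofReal_mul, Complex.exp_ofReal_mul_I_re, mem_antidiagonal.mp hij]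
    ring
  have hnorm : ‖1 - w‖ = √(1 - 2 * s * Real.cos θ + s ^ 2) := by
    rw [Complex.norm_def, Complex.normSq_apply]
    congr 1
    simp [w, Complex.exp_ofReal_mul_I_re, Complex.exp_ofReal_mul_I_im]
    nlinarith [Real.sin_sq_add_cos_sq θ]
  have h := Complex.hasSum_re (hasSum_invSqrtSeries_mul hw (by rwa [norm_star]))
  rwa [invSqrtSeries_mul_star hw, Complex.ofReal_re, hnorm, funext hterm] at h

lemma sqrt_eq_mul_sqrt_one_sub_two_mul_add_sq {u v x : ℝ} (hu : 0 < u) (huv : u ≤ v)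
    (hx : x ∈ Set.Icc (u ^ 2) (v ^ 2)) :
    √x = (u + v) / 2 * √(1 - 2 * ((v - u) / (v + u)) * ((u ^ 2 + v ^ 2 - 2 * x) / (v ^ 2 - u ^ 2))
      + ((v - u) / (v + u)) ^ 2) := by
  have hv : 0 < v := hu.trans_le huv
  suffices hx_eq : x = ((u + v) / 2) ^ 2 * (1 - 2 * ((v - u) / (v + u)) *
      ((u ^ 2 + v ^ 2 - 2 * x) / (v ^ 2 - u ^ 2)) + ((v - u) / (v + u)) ^ 2) by
    rw [hx_eq, Real.sqrt_mul (by positivity), Real.sqrt_sq (by positivity), ← hx_eq]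
  rcases huv.eq_or_lt with rfl | hlt
  -- the junk value `(…) / 0 = 0` of the second factor is harmless: it is multiplied by `v - u = 0`
  · rw [le_antisymm hx.2 hx.1]
    ring
  · have h1 : v + u ≠ 0 := by positivity
    have h2 : v ^ 2 - u ^ 2 ≠ 0 := by nlinarith
    field_simp
    ring

lemma sqrt_sub_sqrt_div_sqrt_add_sqrt_mem_Ico {a b : ℝ} (ha : 0 < a) (hab : a ≤ b) :
    (√b - √a) / (√b + √a) ∈ Set.Ico 0 1 := by
  have hsa : 0 < √a := Real.sqrt_pos.2 ha
  have hsab : √a ≤ √b := Real.sqrt_le_sqrt hab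
  exact ⟨div_nonneg (by linarith) (by positivity), (div_lt_one (by positivity)).2 (by linarith)⟩

/-- Truncation of the expansion `x^(-1/2) = R⁻¹ ∑ₖ qᵏ Pₖ(t)` with `R = (√a + √b)/2`. -/
noncomputable def invSqrtApprox (a b : ℝ) (m : ℕ) : ℝ[X] :=
  ∑ k ∈ range m, C (2 / (√a + √b) * ((√b - √a) / (√b + √a)) ^ k) *
    (legendre k).comp (C (-(2 / (b - a))) * X + C ((a + b) / (b - a)))

lemma degree_invSqrtApprox_lt (a b : ℝ) (m : ℕ) : (invSqrtApprox a b m).degree < m := by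
  refine (degree_sum_le _ _).trans_lt
    ((Finset.sup_lt_iff (WithBot.bot_lt_coe m)).2 fun k hk => ?_)
  refine (degree_le_of_natDegree_le ?_).trans_lt (WithBot.coe_lt_coe.2 (mem_range.1 hk))
  refine (natDegree_C_mul_le _ _).trans (natDegree_comp_le.trans ?_)
  simpa using Nat.mul_le_mul (natDegree_legendre_le k)
    (natDegree_linear_le (a := -(2 / (b - a))) (b := (a + b) / (b - a)))

lemma abs_inv_sqrt_sub_eval_invSqrtApprox_le {a b x : ℝ} (ha : 0 < a) (hab : a ≤ b)
    (hx : x ∈ Set.Icc a b) (m : ℕ) :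
    |(√x)⁻¹ - (invSqrtApprox a b m).eval x| ≤ ((√b - √a) / (√b + √a)) ^ m / √a := by
  have hsa : 0 < √a := Real.sqrt_pos.2 ha
  have hsab : √a ≤ √b := Real.sqrt_le_sqrt hab
  have hs : √b + √a ≠ 0 := by positivity
  have ha2 : √a ^ 2 = a := Real.sq_sqrt ha.le
  have hb2 : √b ^ 2 = b := Real.sq_sqrt (ha.le.trans hab)
  have hq := sqrt_sub_sqrt_div_sqrt_add_sqrt_mem_Ico ha hab
  set q := (√b - √a) / (√b + √a) with hq_def
  set t := (a + b - 2 * x) / (b - a) with ht_def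
  have ht : t ∈ Set.Icc (-1) 1 := by
    rw [Set.mem_Icc, ← abs_le, ht_def, abs_div, abs_of_nonneg (by linarith : 0 ≤ b - a)]
    exact div_le_one_of_le₀ (abs_le.2 ⟨by linarith [hx.2], by linarith [hx.1]⟩) (by linarith)
  have hsqrt : √x = (√a + √b) / 2 * √(1 - 2 * q * t + q ^ 2) := by
    have := sqrt_eq_mul_sqrt_one_sub_two_mul_add_sq hsa hsab (by rwa [ha2, hb2])
    rwa [ha2, hb2] at this
  have heval : (invSqrtApprox a b m).eval x =
      2 / (√a + √b) * ∑ k ∈ range m, q ^ k * (legendre k).eval t := by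
    have hlin : -(2 / (b - a)) * x + (a + b) / (b - a) = t := by rw [ht_def]; ring
    simp only [invSqrtApprox, eval_finsetSum, eval_mul, eval_C, eval_comp, eval_add, eval_X,
      hlin, mul_sum]
    exact sum_congr rfl fun k _ => by ring
  have htail := dist_sum_range_le_of_hasSum
    (hasSum_legendre (abs_lt.2 ⟨by linarith [hq.1], hq.2⟩) ht) hq.2 (fun n => by
      rw [Real.norm_eq_abs, abs_mul, abs_of_nonneg (pow_nonneg hq.1 n)]
      exact mul_le_of_le_one_right (by positivity) (abs_eval_legendre_le_one ht n)) m
  rw [hsqrt, mul_inv, heval, inv_div, ← mul_sub, abs_mul, abs_of_pos (by positivity),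
    abs_sub_comm, ← Real.dist_eq]
  calc 2 / (√a + √b) * dist _ _ ≤ 2 / (√a + √b) * (q ^ m / (1 - q)) := by gcongr
    _ = q ^ m / √a := by
      rw [show 1 - q = 2 * √a / (√b + √a) by rw [hq_def]; field_simp; ring, add_comm (√a)]
      field_simp

namespace Matrix

variable {ι 𝕜 : Type*} [Fintype ι] [DecidableEq ι] [RCLike 𝕜]

lemma sum_norm_sq_apply_eq_one_of_mem_unitaryGroup {U : Matrix ι ι 𝕜}
    (hU : U ∈ unitaryGroup ι 𝕜) (k : ι) : ∑ i, ‖U k i‖ ^ 2 = 1 := by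
  have h : (U * star U) k k = 1 := by rw [Unitary.mul_star_self_of_mem hU, one_apply_eq]
  simp only [mul_apply, star_apply, RCLike.star_def, RCLike.mul_conj] at h
  exact_mod_cast h

lemma norm_mul_diagonal_mul_star_apply_le {U : Matrix ι ι 𝕜} (hU : U ∈ unitaryGroup ι 𝕜)
    {d : ι → 𝕜} {C : ℝ} (hd : ∀ i, ‖d i‖ ≤ C) (k t : ι) :
    ‖(U * diagonal d * star U) k t‖ ≤ C := by
  have hC : 0 ≤ C := (norm_nonneg _).trans (hd k)
  have hcs := Real.sum_mul_le_sqrt_mul_sqrt univ (fun i => ‖U k i‖) (fun i => ‖U t i‖)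
  rw [sum_norm_sq_apply_eq_one_of_mem_unitaryGroup hU,
    sum_norm_sq_apply_eq_one_of_mem_unitaryGroup hU, Real.sqrt_one, mul_one] at hcs
  calc ‖(U * diagonal d * star U) k t‖ = ‖∑ i, U k i * d i * star (U t i)‖ := by
        simp only [mul_apply (M := U * diagonal d), mul_diagonal, star_apply]
    _ ≤ ∑ i, C * (‖U k i‖ * ‖U t i‖) := by
        refine (norm_sum_le _ _).trans (sum_le_sum fun i _ => ?_)
        rw [norm_mul, norm_mul, norm_star]
        nlinarith [hd i, norm_nonneg (U k i), norm_nonneg (U t i), norm_nonneg (d i),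
          mul_nonneg (norm_nonneg (U k i)) (norm_nonneg (U t i))]
    _ ≤ C := by
        rw [← mul_sum]
        exact mul_le_of_le_one_right hC hcs

lemma IsHermitian.norm_cfc_apply_le {A : Matrix ι ι 𝕜} (hA : A.IsHermitian) {f : ℝ → ℝ}
    {C : ℝ} (hf : ∀ i, |f (hA.eigenvalues i)| ≤ C) (k t : ι) : ‖cfc f A k t‖ ≤ C := by
  rw [hA.cfc_eq, IsHermitian.cfc, Unitary.conjStarAlgAut_apply]
  exact norm_mul_diagonal_mul_star_apply_le hA.eigenvectorUnitary.2
    (fun i => by simpa using hf i) k t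

lemma PosDef.inv_sqrt_eq_cfc {M : Matrix ι ι 𝕜} (hM : M.PosDef) :
    hM.posSemidef.sqrt⁻¹ = cfc (fun x => (√x)⁻¹) M := by
  have hsqrt : hM.posSemidef.sqrt = cfc Real.sqrt M := by
    rw [hM.1.cfc_eq, IsHermitian.cfc, Unitary.conjStarAlgAut_apply]
    rfl
  have hcont := fun f : ℝ → ℝ => M.finite_real_spectrum.continuousOn f
  refine inv_eq_left_inv ?_
  rw [hsqrt, ← cfc_mul _ _ M (hcont _) (hcont _), ← cfc_one ℝ M hM.1.isSelfAdjoint]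
  refine cfc_congr fun x hx => inv_mul_cancel₀ ?_
  obtain ⟨i, rfl⟩ := hM.1.spectrum_real_eq_range_eigenvalues ▸ hx
  exact (Real.sqrt_pos.2 (hM.eigenvalues_pos i)).ne'

lemma PosDef.norm_inv_sqrt_apply_le {M : Matrix ι ι 𝕜} (hM : M.PosDef) {p : ℝ[X]} {k t : ι}
    (hp : aeval M p k t = 0) {ε : ℝ}
    (hε : ∀ i, |(√(hM.1.eigenvalues i))⁻¹ - p.eval (hM.1.eigenvalues i)| ≤ ε) :
    ‖hM.posSemidef.sqrt⁻¹ k t‖ ≤ ε := by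
  have hcont := fun f : ℝ → ℝ => M.finite_real_spectrum.continuousOn f
  rw [← sub_zero (hM.posSemidef.sqrt⁻¹ k t), ← hp, ← sub_apply, hM.inv_sqrt_eq_cfc,
    ← cfc_polynomial p M hM.1.isSelfAdjoint, ← cfc_sub _ _ M (hcont _) (hcont _)]
  exact hM.1.norm_cfc_apply_le hε k t

section Banded

variable {R : Type*} [Semiring R] {n : ℕ} {M : Matrix (Fin n) (Fin n) R} {β : ℝ}

lemma pow_apply_eq_zero_of_banded
    (hband : ∀ i j : Fin n, β < |((i : ℕ) : ℝ) - ((j : ℕ) : ℝ)| → M i j = 0)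
    (j : ℕ) {k t : Fin n} (h : j * β < |((k : ℕ) : ℝ) - ((t : ℕ) : ℝ)|) : (M ^ j) k t = 0 := by
  induction j generalizing t with
  | zero =>
    refine one_apply_ne fun hkt => ?_
    simp [hkt] at h
  | succ j ih =>
    rw [pow_succ, mul_apply]
    refine sum_eq_zero fun l _ => ?_
    by_cases hl : j * β < |((k : ℕ) : ℝ) - ((l : ℕ) : ℝ)|
    · rw [ih hl, zero_mul]
    · have htri := abs_sub_le ((k : ℕ) : ℝ) ((l : ℕ) : ℝ) ((t : ℕ) : ℝ)
      rw [hband l t (by push_cast at h; linarith), mul_zero]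

lemma aeval_apply_eq_zero_of_banded {S : Type*} [CommSemiring S] [Algebra S R]
    (hband : ∀ i j : Fin n, β < |((i : ℕ) : ℝ) - ((j : ℕ) : ℝ)| → M i j = 0) {p : S[X]} {m : ℕ}
    (hp : p.degree < m) {k t : Fin n} (h : ∀ j < m, j * β < |((k : ℕ) : ℝ) - ((t : ℕ) : ℝ)|) :
    aeval M p k t = 0 := by
  rw [aeval_eq_sum_range, sum_apply]
  refine sum_eq_zero fun j _ => ?_
  by_cases hc : p.coeff j = 0
  · rw [hc, zero_smul, zero_apply]
  · have hj : j < m := by exact_mod_cast (le_degree_of_ne_zero hc).trans_lt hp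
    rw [smul_apply, pow_apply_eq_zero_of_banded hband j (h j hj), smul_zero]

end Banded

end Matrix

open Matrix in
/-- Explicit exponential decay bound for the entries of the inverse square root of a banded
Hermitian positive definite matrix `M`, in terms of `κ₀ = λ_max/λ_min`:
`|(M^{-1/2})_{kt}| ≤ (2/π)(C(0) + C₂) q^{|k-t|/β}` with
`q = (√λ_max - √λ_min)/(√λ_max + √λ_min)`. Here `M^{-1/2}` is the inverse of the unique
Hermitian positive definite square root of `M`, realized as `hM.posSemidef.sqrt⁻¹`. -/
theorem inv_sqrt_banded_entry_bound
    (n β : ℕ) (hβ : 0 < β) (M : Matrix (Fin n) (Fin n) ℂ) (hM : M.PosDef)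
    (hband : ∀ i j : Fin n, (β : ℝ) < |((i : ℕ) : ℝ) - ((j : ℕ) : ℝ)| → M i j = 0)
    (lmin lmax : ℝ)
    (hlmin : IsLeast (Set.range hM.1.eigenvalues) lmin)
    (hlmax : IsGreatest (Set.range hM.1.eigenvalues) lmax)
    (k t : Fin n) :
    ‖((hM.posSemidef.sqrt)⁻¹) k t‖ ≤
      (2 / Real.pi) *
        (max (1 / lmin) ((1 + Real.sqrt (lmax / lmin)) ^ 2 / (2 * lmax)) +
          max 1 (Real.sqrt (1 + (1 / 2) * Real.sqrt (lmax / lmin)))) *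
        ((Real.sqrt lmax - Real.sqrt lmin) / (Real.sqrt lmax + Real.sqrt lmin)) ^
          (|((k : ℕ) : ℝ) - ((t : ℕ) : ℝ)| / β) := by
  obtain ⟨i₀, hi₀⟩ := hlmin.1
  have hlmin_pos : 0 < lmin := hi₀ ▸ hM.eigenvalues_pos i₀
  have hle : lmin ≤ lmax := hlmin.2 hlmax.1
  have hq := sqrt_sub_sqrt_div_sqrt_add_sqrt_mem_Ico hlmin_pos hle
  set q := (√lmax - √lmin) / (√lmax + √lmin)
  set d := |((k : ℕ) : ℝ) - ((t : ℕ) : ℝ)|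
  set m := ⌈d / β⌉₊
  have hentry : ‖hM.posSemidef.sqrt⁻¹ k t‖ ≤ q ^ m / √lmin :=
    hM.norm_inv_sqrt_apply_le
      (aeval_apply_eq_zero_of_banded hband (degree_invSqrtApprox_lt lmin lmax m) fun j hj =>
        (lt_div_iff₀ (by exact_mod_cast hβ)).1 (Nat.lt_ceil.1 hj))
      fun i => abs_inv_sqrt_sub_eval_invSqrtApprox_le hlmin_pos hle
        ⟨hlmin.2 ⟨i, rfl⟩, hlmax.2 ⟨i, rfl⟩⟩ m
  have hdecay : q ^ m ≤ q ^ (d / β) := by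
    rw [← Real.rpow_natCast]
    exact Real.rpow_le_rpow_of_exponent_ge' hq.1 hq.2.le (by positivity) (Nat.le_ceil _)
  have hconst := Real.inv_sqrt_le_two_div_pi_mul hlmin_pos
  calc ‖hM.posSemidef.sqrt⁻¹ k t‖ ≤ (√lmin)⁻¹ * q ^ m := by rwa [← div_eq_inv_mul]
    _ ≤ 2 / Real.pi * (1 / lmin + 1) * q ^ (d / β) := mul_le_mul hconst hdecay (pow_nonneg hq.1 m)
        ((inv_nonneg.2 (Real.sqrt_nonneg _)).trans hconst)
    _ ≤ _ := mul_le_mul_of_nonneg_right (by gcongr <;> exact le_max_left _ _)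
        (Real.rpow_nonneg hq.1 _)
end

section
/- Let M be an n×n Hermitian positive definite complex matrix, let 𝒜 = M ⊗ I + I ⊗ M, and let 𝒜^{−1/2} denote the inverse of the unique Hermitian positive definite square root of 𝒜. Then for all index pairs k = (k₁,k₂) and t = (t₁,t₂), |(𝒜^{−1/2})_{kt}| ≤ (1/√π) · ( ∫₀^∞ |(exp(−τM))_{k₁t₁}|² · τ^{−1/2} dτ )^{1/2} · ( ∫₀^∞ |(exp(−τM))_{k₂t₂}|² · τ^{−1/2} dτ )^{1/2}. -/
/-!
Diagonalise `M = U D Uᴴ` with `D = diag d`, `d > 0`. Then `𝒜 = (U ⊗ U) Λ (U ⊗ U)ᴴ` with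
`Λ = diag (dᵢ + dⱼ)`, so uniqueness of the positive square root gives
`S⁻¹ = (U ⊗ U) Λ^{-1/2} (U ⊗ U)ᴴ`. Applying `λ^{-1/2} = π^{-1/2} ∫₀^∞ τ^{-1/2} e^{-τλ} dτ` to each
eigenvalue and factoring `e^{-τ(dᵢ + dⱼ)} = e^{-τdᵢ} e^{-τdⱼ}` yields
`(S⁻¹)_{kt} = π^{-1/2} ∫₀^∞ τ^{-1/2} exp(-τM)_{k₁t₁} exp(-τM)_{k₂t₂} dτ`,
and the bound is the Cauchy–Schwarz inequality for the measure `τ^{-1/2} dτ` on `(0, ∞)`.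
-/

open MeasureTheory Set
open scoped Kronecker ComplexOrder
open Matrix

theorem norm_integral_mul_le_sqrt_mul_sqrt {α 𝕜 : Type*} [MeasurableSpace α] {μ : Measure α}
    [RCLike 𝕜] {f g : α → 𝕜} (hf : MemLp f 2 μ) (hg : MemLp g 2 μ) :
    ‖∫ a, f a * g a ∂μ‖ ≤ √(∫ a, ‖f a‖ ^ 2 ∂μ) * √(∫ a, ‖g a‖ ^ 2 ∂μ) := by
  have hf' : MemLp f (ENNReal.ofReal 2) μ := by simpa using hf
  have hg' : MemLp g (ENNReal.ofReal 2) μ := by simpa using hg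
  calc ‖∫ a, f a * g a ∂μ‖ ≤ ∫ a, ‖f a‖ * ‖g a‖ ∂μ := by
        simpa only [norm_mul] using norm_integral_le_integral_norm (fun a => f a * g a)
    _ ≤ (∫ a, ‖f a‖ ^ (2 : ℝ) ∂μ) ^ (1 / 2 : ℝ) * (∫ a, ‖g a‖ ^ (2 : ℝ) ∂μ) ^ (1 / 2 : ℝ) :=
        integral_mul_norm_le_Lp_mul_Lq .two_two hf' hg'
    _ = √(∫ a, ‖f a‖ ^ 2 ∂μ) * √(∫ a, ‖g a‖ ^ 2 ∂μ) := by
        simp only [Real.rpow_two, Real.sqrt_eq_rpow]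

theorem norm_integral_smul_mul_le {α 𝕜 : Type*} [MeasurableSpace α] {μ : Measure α}
    [RCLike 𝕜] {w : α → ℝ} (hw : 0 ≤ᵐ[μ] w) {f g : α → 𝕜}
    (hf : MemLp (fun a => √(w a) • f a) 2 μ) (hg : MemLp (fun a => √(w a) • g a) 2 μ) :
    ‖∫ a, w a • (f a * g a) ∂μ‖ ≤
      √(∫ a, ‖f a‖ ^ 2 * w a ∂μ) * √(∫ a, ‖g a‖ ^ 2 * w a ∂μ) := by
  have key := norm_integral_mul_le_sqrt_mul_sqrt hf hg
  have hfg : (fun a => (√(w a) • f a) * (√(w a) • g a)) =ᵐ[μ] fun a => w a • (f a * g a) := by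
    filter_upwards [hw] with a ha
    rw [smul_mul_smul_comm, Real.mul_self_sqrt ha]
  have hnorm : ∀ h : α → 𝕜, (fun a => ‖√(w a) • h a‖ ^ 2) =ᵐ[μ] fun a => ‖h a‖ ^ 2 * w a := by
    intro h
    filter_upwards [hw] with a ha
    rw [norm_smul, mul_pow, Real.norm_eq_abs, sq_abs, Real.sq_sqrt ha, mul_comm]
  rwa [integral_congr_ae hfg, integral_congr_ae (hnorm f), integral_congr_ae (hnorm g)] at key

theorem integrableOn_rpow_neg_half_mul_exp_neg_mul {c : ℝ} (hc : 0 < c) :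
    IntegrableOn (fun τ : ℝ => τ ^ (-(1 / 2) : ℝ) * Real.exp (-(τ * c))) (Ioi 0) := by
  simpa [mul_comm c] using
    integrableOn_rpow_mul_exp_neg_mul_rpow (s := -(1 / 2)) (p := 1) (by norm_num) one_pos hc

theorem integral_rpow_neg_half_mul_exp_neg_mul {c : ℝ} (hc : 0 < c) :
    ∫ τ in Ioi (0 : ℝ), τ ^ (-(1 / 2) : ℝ) * Real.exp (-(τ * c)) = √Real.pi / √c := by
  simp only [mul_comm _ c]
  have h := Real.integral_rpow_mul_exp_neg_mul_Ioi (a := 1 / 2) (by norm_num) hc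
  rw [show (1 / 2 : ℝ) - 1 = -(1 / 2) by norm_num] at h
  rw [h, Real.Gamma_one_half_eq, one_div, ← Real.sqrt_eq_rpow, Real.sqrt_inv]
  ring

theorem memLp_sqrt_rpow_neg_half_mul_exp_neg_mul {c : ℝ} (hc : 0 < c) :
    MemLp (fun τ : ℝ => √(τ ^ (-(1 / 2) : ℝ)) * Real.exp (-(τ * c))) 2
      (volume.restrict (Ioi 0)) := by
  have hmeas : AEStronglyMeasurable (fun τ : ℝ => √(τ ^ (-(1 / 2) : ℝ)) * Real.exp (-(τ * c)))
      (volume.restrict (Ioi 0)) := by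
    refine ContinuousOn.aestronglyMeasurable (fun τ hτ => ?_) measurableSet_Ioi
    exact (((Real.continuousAt_rpow_const τ _ (.inl (ne_of_gt hτ))).sqrt).mul
      (by fun_prop)).continuousWithinAt
  refine (memLp_two_iff_integrable_sq hmeas).2 ?_
  refine (integrableOn_rpow_neg_half_mul_exp_neg_mul (mul_pos two_pos hc)).congr_fun
    (fun τ hτ => ?_) measurableSet_Ioi
  rw [mul_pow, Real.sq_sqrt (Real.rpow_nonneg (le_of_lt hτ) _), ← Real.exp_nat_mul]
  ring_nf

namespace Matrix

variable {m n R : Type*} [Fintype m] [Fintype n] [DecidableEq m] [DecidableEq n]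

theorem mul_diagonal_mul_conjTranspose_apply [NonUnitalNonAssocSemiring R]
    [Star R] (W : Matrix m m R) (v : m → R) (k t : m) :
    (W * diagonal v * Wᴴ) k t = ∑ i, W k i * v i * star (W t i) := by
  rw [mul_apply]
  simp only [mul_diagonal, conjTranspose_apply]

theorem conj_diagonal_kronecker_conj_diagonal [CommSemiring R]
    [StarRing R] (U : Matrix m m R) (V : Matrix n n R) (a : m → R) (b : n → R) :
    (U * diagonal a * Uᴴ) ⊗ₖ (V * diagonal b * Vᴴ) =
      (U ⊗ₖ V) * diagonal (fun i => a i.1 * b i.2) * (U ⊗ₖ V)ᴴ := by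
  rw [conjTranspose_kronecker, ← diagonal_kronecker_diagonal, mul_kronecker_mul,
    mul_kronecker_mul]

theorem conj_diagonal_kronecker_one_add_one_kronecker_conj_diagonal [CommSemiring R] [StarRing R]
    {U : Matrix m m R} {V : Matrix n n R} (hU : U * Uᴴ = 1) (hV : V * Vᴴ = 1)
    (a : m → R) (b : n → R) :
    (U * diagonal a * Uᴴ) ⊗ₖ (1 : Matrix n n R) + (1 : Matrix m m R) ⊗ₖ (V * diagonal b * Vᴴ) =
      (U ⊗ₖ V) * diagonal (fun i => a i.1 + b i.2) * (U ⊗ₖ V)ᴴ := by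
  calc _ = (U * diagonal a * Uᴴ) ⊗ₖ (V * diagonal (fun _ => 1) * Vᴴ) +
        (U * diagonal (fun _ => 1) * Uᴴ) ⊗ₖ (V * diagonal b * Vᴴ) := by
        simp only [diagonal_one, Matrix.mul_one, hU, hV]
    _ = _ := by
        rw [conj_diagonal_kronecker_conj_diagonal, conj_diagonal_kronecker_conj_diagonal,
          ← Matrix.add_mul, ← Matrix.mul_add, diagonal_add]
        simp only [mul_one, one_mul]

theorem conj_diagonal_mul_conj_diagonal [Semiring R] [Star R]
    {W : Matrix m m R} (hW : Wᴴ * W = 1) (a b : m → R) :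
    (W * diagonal a * Wᴴ) * (W * diagonal b * Wᴴ) = W * diagonal (fun i => a i * b i) * Wᴴ := by
  calc _ = W * diagonal a * (Wᴴ * W) * diagonal b * Wᴴ := by simp only [Matrix.mul_assoc]
    _ = _ := by rw [hW, Matrix.mul_one, Matrix.mul_assoc W, diagonal_mul_diagonal]

theorem IsHermitian.eq_conj_diagonal_eigenvalues {𝕜 : Type*} [RCLike 𝕜] {A : Matrix m m 𝕜}
    (hA : A.IsHermitian) :
    A = (hA.eigenvectorUnitary : Matrix m m 𝕜) * diagonal (fun i => (hA.eigenvalues i : 𝕜)) *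
      (hA.eigenvectorUnitary : Matrix m m 𝕜)ᴴ := by
  simpa [star_eq_conjTranspose, Function.comp_def] using hA.spectral_theorem

theorem exp_conj_diagonal {U : Matrix m m ℂ} (hU : U ∈ unitary (Matrix m m ℂ)) (v : m → ℂ) :
    NormedSpace.exp (U * diagonal v * Uᴴ) = U * diagonal (fun i => Complex.exp (v i)) * Uᴴ := by
  have hinv : U⁻¹ = Uᴴ := inv_eq_left_inv (Unitary.star_mul_self_of_mem hU)
  rw [← hinv, exp_conj U _ (Unitary.isUnit_coe (U := ⟨U, hU⟩)), exp_diagonal, Pi.exp_def]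
  simp only [Complex.exp_eq_exp_ℂ]

theorem IsHermitian.exp_neg_smul {A : Matrix m m ℂ} (hA : A.IsHermitian) (τ : ℝ) :
    NormedSpace.exp (-(τ • A)) = (hA.eigenvectorUnitary : Matrix m m ℂ) *
      diagonal (fun i => (Real.exp (-(τ * hA.eigenvalues i)) : ℂ)) *
      (hA.eigenvectorUnitary : Matrix m m ℂ)ᴴ := by
  conv_lhs => rw [hA.eq_conj_diagonal_eigenvalues]
  rw [← smul_mul_assoc, ← mul_smul_comm, ← Matrix.neg_mul, ← Matrix.mul_neg, ← diagonal_smul,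
    diagonal_neg, exp_conj_diagonal hA.eigenvectorUnitary.2]
  simp [Complex.ofReal_exp]

theorem PosSemidef.eq_conj_diagonal_sqrt {S W : Matrix m m ℂ} (hS : S.PosSemidef)
    (hW : W ∈ unitary (Matrix m m ℂ)) {d : m → ℝ} (hd : ∀ i, 0 ≤ d i)
    (hSS : S * S = W * diagonal (fun i => (d i : ℂ)) * Wᴴ) :
    S = W * diagonal (fun i => (√(d i) : ℂ)) * Wᴴ := by
  have hT : (W * diagonal (fun i => (√(d i) : ℂ)) * Wᴴ).PosSemidef :=
    (posSemidef_diagonal_iff.2 fun i => by exact_mod_cast Real.sqrt_nonneg (d i))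
      |>.mul_mul_conjTranspose_same W
  open scoped MatrixOrder in
  refine (CFC.sq_eq_sq_iff S _ hS.nonneg hT.nonneg).1 ?_
  rw [sq, sq, hSS, conj_diagonal_mul_conj_diagonal (Unitary.star_mul_self_of_mem hW)]
  simp [← Complex.ofReal_mul, Real.mul_self_sqrt (hd _)]

theorem PosSemidef.inv_eq_conj_diagonal_inv_sqrt {S W : Matrix m m ℂ} (hS : S.PosSemidef)
    (hW : W ∈ unitary (Matrix m m ℂ)) {d : m → ℝ} (hd : ∀ i, 0 < d i)
    (hSS : S * S = W * diagonal (fun i => (d i : ℂ)) * Wᴴ) :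
    S⁻¹ = W * diagonal (fun i => (((√(d i))⁻¹ : ℝ) : ℂ)) * Wᴴ := by
  rw [hS.eq_conj_diagonal_sqrt hW (fun i => (hd i).le) hSS]
  refine inv_eq_right_inv ?_
  rw [conj_diagonal_mul_conj_diagonal (Unitary.star_mul_self_of_mem hW)]
  have hcancel : (fun i => (√(d i) : ℂ) * (((√(d i))⁻¹ : ℝ) : ℂ)) = fun _ => 1 :=
    funext fun i => by
      rw [← Complex.ofReal_mul, mul_inv_cancel₀ (Real.sqrt_pos.2 (hd i)).ne', Complex.ofReal_one]
  rw [hcancel, diagonal_one, Matrix.mul_one, ← star_eq_conjTranspose,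
    Unitary.mul_star_self_of_mem hW]

theorem IsHermitian.kronecker_one_add_one_kronecker {A : Matrix m m ℂ} {B : Matrix n n ℂ}
    (hA : A.IsHermitian) (hB : B.IsHermitian) :
    A ⊗ₖ (1 : Matrix n n ℂ) + (1 : Matrix m m ℂ) ⊗ₖ B =
      ((hA.eigenvectorUnitary : Matrix m m ℂ) ⊗ₖ (hB.eigenvectorUnitary : Matrix n n ℂ)) *
        diagonal (fun i => ((hA.eigenvalues i.1 + hB.eigenvalues i.2 : ℝ) : ℂ)) *
        ((hA.eigenvectorUnitary : Matrix m m ℂ) ⊗ₖ (hB.eigenvectorUnitary : Matrix n n ℂ))ᴴ := by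
  conv_lhs => rw [hA.eq_conj_diagonal_eigenvalues, hB.eq_conj_diagonal_eigenvalues]
  rw [conj_diagonal_kronecker_one_add_one_kronecker_conj_diagonal
    (Unitary.mul_star_self_of_mem hA.eigenvectorUnitary.2)
    (Unitary.mul_star_self_of_mem hB.eigenvectorUnitary.2)]
  push_cast
  rfl

theorem IsHermitian.exp_neg_smul_kronecker_exp_neg_smul {A : Matrix m m ℂ} {B : Matrix n n ℂ}
    (hA : A.IsHermitian) (hB : B.IsHermitian) (τ : ℝ) :
    NormedSpace.exp (-(τ • A)) ⊗ₖ NormedSpace.exp (-(τ • B)) =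
      ((hA.eigenvectorUnitary : Matrix m m ℂ) ⊗ₖ (hB.eigenvectorUnitary : Matrix n n ℂ)) *
        diagonal (fun i => (Real.exp (-(τ * (hA.eigenvalues i.1 + hB.eigenvalues i.2))) : ℂ)) *
        ((hA.eigenvectorUnitary : Matrix m m ℂ) ⊗ₖ (hB.eigenvectorUnitary : Matrix n n ℂ))ᴴ := by
  rw [hA.exp_neg_smul, hB.exp_neg_smul, conj_diagonal_kronecker_conj_diagonal]
  simp only [mul_add, neg_add, Real.exp_add, Complex.ofReal_mul]

theorem conj_diagonal_inv_sqrt_apply_eq_integral (W : Matrix m m ℂ) {c : m → ℝ}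
    (hc : ∀ i, 0 < c i) (k t : m) :
    (W * diagonal (fun i => (((√(c i))⁻¹ : ℝ) : ℂ)) * Wᴴ) k t =
      (√Real.pi)⁻¹ * ∫ τ in Ioi (0 : ℝ),
        τ ^ (-(1 / 2) : ℝ) • (W * diagonal (fun i => (Real.exp (-(τ * c i)) : ℂ)) * Wᴴ) k t := by
  have hterm : ∀ τ : ℝ, τ ^ (-(1 / 2) : ℝ) •
      (W * diagonal (fun i => (Real.exp (-(τ * c i)) : ℂ)) * Wᴴ) k t =
      ∑ i, W k i * star (W t i) * ((τ ^ (-(1 / 2) : ℝ) * Real.exp (-(τ * c i)) : ℝ) : ℂ) := by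
    intro τ
    simp only [mul_diagonal_mul_conjTranspose_apply, Finset.smul_sum, Complex.real_smul]
    refine Finset.sum_congr rfl fun i _ => ?_
    push_cast
    ring
  have hint : ∀ i, Integrable (fun τ : ℝ => W k i * star (W t i) *
      ((τ ^ (-(1 / 2) : ℝ) * Real.exp (-(τ * c i)) : ℝ) : ℂ)) (volume.restrict (Ioi 0)) :=
    fun i => (integrableOn_rpow_neg_half_mul_exp_neg_mul (hc i)).ofReal.const_mul _
  simp only [hterm]
  rw [integral_finsetSum _ fun i _ => hint i, Finset.mul_sum, mul_diagonal_mul_conjTranspose_apply]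
  refine Finset.sum_congr rfl fun i _ => ?_
  rw [integral_const_mul, integral_complex_ofReal, integral_rpow_neg_half_mul_exp_neg_mul (hc i)]
  have hπ : (√Real.pi : ℂ) ≠ 0 := by exact_mod_cast (Real.sqrt_pos.2 Real.pi_pos).ne'
  push_cast
  field_simp

theorem memLp_sqrt_rpow_smul_conj_diagonal_exp_apply (U : Matrix m m ℂ) {d : m → ℝ}
    (hd : ∀ i, 0 < d i) (a b : m) :
    MemLp (fun τ : ℝ => √(τ ^ (-(1 / 2) : ℝ)) •
      (U * diagonal (fun i => (Real.exp (-(τ * d i)) : ℂ)) * Uᴴ) a b) 2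
      (volume.restrict (Ioi 0)) := by
  simp only [mul_diagonal_mul_conjTranspose_apply, Finset.smul_sum]
  refine memLp_finsetSum _ fun i _ => ?_
  convert ((memLp_sqrt_rpow_neg_half_mul_exp_neg_mul (hd i)).ofReal (K := ℂ)).const_mul
    (U a i * star (U b i)) using 2 with τ
  change _ = _ * ((√(τ ^ (-(1 / 2) : ℝ)) * Real.exp (-(τ * d i)) : ℝ) : ℂ)
  rw [Complex.real_smul, Complex.ofReal_mul]
  ring

theorem PosDef.memLp_sqrt_rpow_smul_exp_neg_smul_apply {A : Matrix m m ℂ} (hA : A.PosDef)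
    (a b : m) :
    MemLp (fun τ : ℝ => √(τ ^ (-(1 / 2) : ℝ)) • NormedSpace.exp (-(τ • A)) a b) 2
      (volume.restrict (Ioi 0)) := by
  simpa only [hA.1.exp_neg_smul] using
    memLp_sqrt_rpow_smul_conj_diagonal_exp_apply _ hA.eigenvalues_pos a b

end Matrix

/-- Entrywise bound for the inverse square root of the Kronecker sum `𝒜 = M ⊗ I + I ⊗ M`
of a Hermitian positive definite matrix `M` with itself: if `S` is the (unique) Hermitian
positive definite square root of `𝒜`, then
`|(𝒜^{-1/2})_{kt}| ≤ (1/√π) (∫₀^∞ |(exp(-τM))_{k₁t₁}|² τ^{-1/2} dτ)^{1/2}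
(∫₀^∞ |(exp(-τM))_{k₂t₂}|² τ^{-1/2} dτ)^{1/2}`. -/
theorem inv_sqrt_kronecker_entry_bound
    (n : ℕ) (M : Matrix (Fin n) (Fin n) ℂ) (hM : M.PosDef)
    (S : Matrix (Fin n × Fin n) (Fin n × Fin n) ℂ) (hS : S.PosDef)
    (hSsq : S * S = M ⊗ₖ (1 : Matrix (Fin n) (Fin n) ℂ) +
        (1 : Matrix (Fin n) (Fin n) ℂ) ⊗ₖ M)
    (k t : Fin n × Fin n) :
    ‖(S⁻¹) k t‖ ≤
      (1 / Real.sqrt Real.pi) *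
        Real.sqrt (∫ τ in Set.Ioi (0 : ℝ),
          ‖(NormedSpace.exp (-(τ • M))) k.1 t.1‖ ^ 2 * τ ^ (-(1 / 2) : ℝ)) *
        Real.sqrt (∫ τ in Set.Ioi (0 : ℝ),
          ‖(NormedSpace.exp (-(τ • M))) k.2 t.2‖ ^ 2 * τ ^ (-(1 / 2) : ℝ)) := by
  have hd : ∀ i : Fin n × Fin n, 0 < hM.1.eigenvalues i.1 + hM.1.eigenvalues i.2 :=
    fun i => add_pos (hM.eigenvalues_pos _) (hM.eigenvalues_pos _)
  have hSinv := hS.posSemidef.inv_eq_conj_diagonal_inv_sqrt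
    (kronecker_mem_unitary hM.1.eigenvectorUnitary.2 hM.1.eigenvectorUnitary.2) hd
    (by rw [hSsq, hM.1.kronecker_one_add_one_kronecker hM.1])
  have hrepr : S⁻¹ k t = (√Real.pi)⁻¹ * ∫ τ in Ioi (0 : ℝ), τ ^ (-(1 / 2) : ℝ) •
      (NormedSpace.exp (-(τ • M)) k.1 t.1 * NormedSpace.exp (-(τ • M)) k.2 t.2) := by
    rw [hSinv, conj_diagonal_inv_sqrt_apply_eq_integral _ hd]
    simp only [← hM.1.exp_neg_smul_kronecker_exp_neg_smul hM.1, kroneckerMap_apply]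
  have hw : 0 ≤ᵐ[volume.restrict (Ioi 0)] fun τ : ℝ => τ ^ (-(1 / 2) : ℝ) :=
    ae_restrict_of_forall_mem measurableSet_Ioi fun τ hτ => Real.rpow_nonneg (le_of_lt hτ) _
  rw [hrepr, norm_mul, Complex.norm_real, Real.norm_of_nonneg (by positivity),
    one_div (√Real.pi), mul_assoc]
  gcongr
  exact norm_integral_smul_mul_le hw (hM.memLp_sqrt_rpow_smul_exp_neg_smul_apply _ _)
    (hM.memLp_sqrt_rpow_smul_exp_neg_smul_apply _ _)
end
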